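/- Regarded as a ℤ/2ℤ-valued function of the rows a_0,…,a_n ∈ ℤ^n of the matrix A, the function B is multilinear modulo 2: for any index 0 ≤ i ≤ n and any decomposition a_i = a_i' + a_i'' in ℤ^n, one has B(a_0,…,a_i,…,a_n) ≡ B(a_0,…,a_i',…,a_n) + B(a_0,…,a_i'',…,a_n) (mod 2), where on the right-hand side only the i-th row is replaced by a_i' (resp. a_i'') and all other rows are unchanged. -/

import Mathlib

/-!
Each summand `a_{ik} a_{jk} A^k_{ij}` of `B` involves any given row exactly once: as one of the
two entries `a_{ik}`, `a_{jk}`, or as a row of the minor `A^k_{ij}`, on which the determinant is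
linear. Hence `B` is multilinear in the rows already over `ℤ`, and a fortiori modulo `2`.
-/

open Matrix

/-- The strictly increasing embedding `Fin m → Fin (m + 2)` that skips the values
of `i` and `j` (for `i < j`): used to delete rows `i` and `j` of a matrix. -/
def skip2 {m : ℕ} (i j : Fin (m + 2)) (r : Fin m) : Fin (m + 2) :=
  if r.val < i.val then ⟨r.val, by have := r.isLt; omega⟩
  else if r.val + 1 < j.val then ⟨r.val + 1, by have := r.isLt; omega⟩
  else ⟨r.val + 2, by have := r.isLt; omega⟩

/-- `B(A) = Σ_k Σ_{i<j} a_{ik} a_{jk} A^k_{ij}`, where `A^k_{ij}` is the determinant of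
the matrix obtained from `A` by deleting rows `i`, `j` and column `k`. -/
def Bcoef {m : ℕ} (A : Matrix (Fin (m + 2)) (Fin (m + 1)) ℤ) : ℤ :=
  ∑ c : Fin (m + 1), ∑ i : Fin (m + 2), ∑ j : Fin (m + 2),
    if i < j then A i c * A j c * (A.submatrix (skip2 i j) c.succAbove).det else 0

namespace Matrix

variable {l m n o α : Type*} [DecidableEq m]

theorem submatrix_updateRow_of_notMem_range (A : Matrix m n α) {i : m} (v : n → α) {f : l → m}
    (g : o → n) (hi : i ∉ Set.range f) :
    (A.updateRow i v).submatrix f g = A.submatrix f g :=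
  ext fun r s => congr_fun (updateRow_ne fun h => hi ⟨r, h⟩) (g s)

theorem submatrix_updateRow_of_injective [DecidableEq l] (A : Matrix m n α) (r : l) (v : n → α)
    {f : l → m} (hf : f.Injective) (g : o → n) :
    (A.updateRow (f r) v).submatrix f g = (A.submatrix f g).updateRow r (v ∘ g) := by
  ext r' s
  by_cases h : r' = r
  · subst h
    simp
  · simp [updateRow_ne h, updateRow_ne (hf.ne h)]

end Matrix

theorem skip2_injective {m : ℕ} (i j : Fin (m + 2)) : Function.Injective (skip2 i j) := by
  intro r s hrs
  unfold skip2 at hrs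
  rw [Fin.ext_iff] at hrs ⊢
  split_ifs at hrs <;> simp_all <;> omega

theorem range_skip2 {m : ℕ} {i j : Fin (m + 2)} (hij : i < j) : Set.range (skip2 i j) = {i, j}ᶜ := by
  ext k
  rw [Fin.lt_def] at hij
  simp only [Set.mem_range, Set.mem_compl_iff, Set.mem_insert_iff, Set.mem_singleton_iff,
    not_or]
  constructor
  · rintro ⟨r, rfl⟩
    simp only [Fin.ext_iff]
    unfold skip2
    split_ifs <;> simp <;> omega
  · rintro ⟨hki, hkj⟩
    simp only [Fin.ext_iff] at hki hkj ⊢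
    have hk := k.isLt
    by_cases h₁ : k.val < i.val
    · exact ⟨⟨k.val, by omega⟩, by simp [skip2, h₁]⟩
    by_cases h₂ : k.val < j.val
    · refine ⟨⟨k.val - 1, by omega⟩, ?_⟩
      simp only [skip2, if_neg (show ¬(k.val - 1 < i.val) by omega),
        if_pos (show k.val - 1 + 1 < j.val by omega)]
      omega
    · refine ⟨⟨k.val - 2, by omega⟩, ?_⟩
      simp only [skip2, if_neg (show ¬(k.val - 2 < i.val) by omega),
        if_neg (show ¬(k.val - 2 + 1 < j.val) by omega)]
      omega

def Bterm {m : ℕ} (A : Matrix (Fin (m + 2)) (Fin (m + 1)) ℤ) (c : Fin (m + 1))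
    (p q : Fin (m + 2)) : ℤ :=
  A p c * A q c * (A.submatrix (skip2 p q) c.succAbove).det

theorem Bterm_updateRow_add {m : ℕ} (A : Matrix (Fin (m + 2)) (Fin (m + 1)) ℤ)
    (c : Fin (m + 1)) {p q : Fin (m + 2)} (hpq : p < q) (i : Fin (m + 2))
    (v w : Fin (m + 1) → ℤ) :
    Bterm (A.updateRow i (v + w)) c p q =
      Bterm (A.updateRow i v) c p q + Bterm (A.updateRow i w) c p q := by
  unfold Bterm
  by_cases hi : i ∈ Set.range (skip2 p q)
  · obtain ⟨r, rfl⟩ := hi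
    have hr : skip2 p q r ∈ ({p, q}ᶜ : Set _) := range_skip2 hpq ▸ Set.mem_range_self r
    obtain ⟨hp, hq⟩ : skip2 p q r ≠ p ∧ skip2 p q r ≠ q := by simpa [not_or] using hr
    simp only [submatrix_updateRow_of_injective _ _ _ (skip2_injective p q),
      updateRow_ne hp.symm, updateRow_ne hq.symm, Pi.add_comp, det_updateRow_add]
    ring
  · simp only [submatrix_updateRow_of_notMem_range _ _ _ hi]
    have hi' : i ∈ ({p, q} : Set _) := by rwa [range_skip2 hpq, Set.notMem_compl_iff] at hi
    rcases hi' with rfl | rfl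
    · simp only [updateRow_self, updateRow_ne hpq.ne', Pi.add_apply]
      ring
    · simp only [updateRow_self, updateRow_ne hpq.ne, Pi.add_apply]
      ring

theorem Bcoef_updateRow_add {m : ℕ} (A : Matrix (Fin (m + 2)) (Fin (m + 1)) ℤ)
    (i : Fin (m + 2)) (v w : Fin (m + 1) → ℤ) :
    Bcoef (A.updateRow i (v + w)) = Bcoef (A.updateRow i v) + Bcoef (A.updateRow i w) := by
  simp only [Bcoef, ← Finset.sum_add_distrib]
  refine Finset.sum_congr rfl fun c _ => Finset.sum_congr rfl fun p _ =>
    Finset.sum_congr rfl fun q _ => ?_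
  split_ifs with hpq
  · exact Bterm_updateRow_add A c hpq i v w
  · simp

/-- Regarded as a `ℤ/2ℤ`-valued function of the rows of `A`, `B` is multilinear:
if the `i`-th row decomposes as `aᵢ = aᵢ' + aᵢ''`, then
`B(a₀,…,aᵢ,…,aₙ) ≡ B(a₀,…,aᵢ',…,aₙ) + B(a₀,…,aᵢ'',…,aₙ) (mod 2)`. -/
theorem Bcoef_multilinear_mod_two {m : ℕ} (A : Matrix (Fin (m + 2)) (Fin (m + 1)) ℤ)
    (i : Fin (m + 2)) (a' a'' : Fin (m + 1) → ℤ) (h : A i = a' + a'') :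
    Bcoef A ≡ Bcoef (A.updateRow i a') + Bcoef (A.updateRow i a'') [ZMOD 2] := by
  suffices Bcoef A = Bcoef (A.updateRow i a') + Bcoef (A.updateRow i a'') by rw [this]
  calc Bcoef A = Bcoef (A.updateRow i (a' + a'')) := by rw [← h, updateRow_eq_self]
    _ = _ := Bcoef_updateRow_add A i a' a''
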